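/- For a potential ψ in the Schwartz class, the limit T(λ) = lim_{x→+∞, y→-∞} T(x,y,λ) of the reduced transition matrix exists for real λ, has the structure T(λ) = [[a(λ), conj(b(λ))],[b(λ), conj(a(λ))]], and satisfies |a(λ)|² − |b(λ)|² = 1. -/

import Mathlib

/-!
For real `λ` the matrix `V(x, λ)` lies in `su(1,1)`, so every transition matrix lies in
`SU(1,1) = {A | σ₁ Ā σ₁ = A, det A = 1}`: both conditions are propagated by uniqueness of
solutions and by `tr V = 0`. Since the diagonal part of `V` is skew-Hermitian, the column energy
`|M₀ⱼ|² + |M₁ⱼ|²` changes at relative rate at most `2|ψ|`, so it is bounded by a multiple of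
`exp (2 ∫ |ψ|)`. Hence the reduced solution `N(x) = E(λx/2)⁻¹ M(x, 0)`, whose derivative
`E⁻¹ Y₀ M` is dominated by `|ψ|`, has limits at `±∞`. Finally `T(x, y) = N(x) adj N(y)` converges,
and its limit lies in the closed set `SU(1,1)`, which gives both the shape of the limit and
`|a|² - |b|² = 1`.
-/

open Matrix Complex Filter

noncomputable section

def sigma3 : Matrix (Fin 2) (Fin 2) ℂ := !![1, 0; 0, -1]

def Y0 (ψ : ℝ → ℂ) (x : ℝ) : Matrix (Fin 2) (Fin 2) ℂ :=
  !![0, (starRingEnd ℂ) (ψ x); ψ x, 0]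

def Vmat (ψ : ℝ → ℂ) (lam : ℂ) (x : ℝ) : Matrix (Fin 2) (Fin 2) ℂ :=
  (-(Complex.I * lam) / 2) • sigma3 + Y0 ψ x

/-- `E(λx/2)⁻¹ = exp((iλx/2)σ₃)` written explicitly. -/
def Einv (lam x : ℝ) : Matrix (Fin 2) (Fin 2) ℂ :=
  !![Complex.exp (Complex.I * lam * x / 2), 0;
     0, Complex.exp (-(Complex.I * lam * x / 2))]

open MeasureTheory Topology

theorem le_mul_exp_abs_sub_of_abs_deriv_le {u u' w W : ℝ → ℝ}
    (hu : ∀ t, HasDerivAt u (u' t) t) (hW : ∀ t, HasDerivAt W (w t) t)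
    (hbound : ∀ t, |u' t| ≤ w t * u t) {a : ℝ} (ha : 0 ≤ u a) (x : ℝ) :
    u x ≤ u a * Real.exp |W x - W a| := by
  rcases le_total a x with hax | hxa
  · have hanti : Antitone fun t => u t * Real.exp (-W t) :=
      antitone_of_hasDerivAt_nonpos (fun t => (hu t).mul ((hW t).neg.exp)) fun t => by
        simp only [Pi.zero_apply, Pi.neg_apply]
        nlinarith [Real.exp_pos (-W t), (abs_le.1 (hbound t)).2]
    have h := hanti hax
    calc u x = u x * Real.exp (-W x) * Real.exp (W x) := by
          rw [mul_assoc, ← Real.exp_add]; simp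
      _ ≤ u a * Real.exp (-W a) * Real.exp (W x) := by gcongr
      _ = u a * Real.exp (W x - W a) := by
          rw [mul_assoc, ← Real.exp_add]; ring_nf
      _ ≤ u a * Real.exp |W x - W a| := by gcongr; exact le_abs_self _
  · have hmono : Monotone fun t => u t * Real.exp (W t) :=
      monotone_of_hasDerivAt_nonneg (fun t => (hu t).mul ((hW t).exp)) fun t => by
        simp only [Pi.zero_apply]
        nlinarith [Real.exp_pos (W t), (abs_le.1 (hbound t)).1]
    have h := hmono hxa
    calc u x = u x * Real.exp (W x) * Real.exp (-W x) := by
          rw [mul_assoc, ← Real.exp_add]; simp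
      _ ≤ u a * Real.exp (W a) * Real.exp (-W x) := by gcongr
      _ = u a * Real.exp (-(W x - W a)) := by
          rw [mul_assoc, ← Real.exp_add]; ring_nf
      _ ≤ u a * Real.exp |W x - W a| := by gcongr; exact neg_le_abs _

theorem Matrix.exists_tendsto_of_hasDerivAt_of_integrable {m n E : Type*} [NormedAddCommGroup E]
    [NormedSpace ℝ E] [CompleteSpace E] {N N' : ℝ → Matrix m n E}
    (hN : ∀ x i j, HasDerivAt (fun t => N t i j) (N' x i j) x)
    (hN' : ∀ i j, Integrable fun t => N' t i j) :
    (∃ L, Tendsto N atTop (𝓝 L)) ∧ ∃ L, Tendsto N atBot (𝓝 L) :=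
  ⟨⟨Matrix.of fun i j => limUnder atTop fun t => N t i j,
      tendsto_pi_nhds.2 fun i => tendsto_pi_nhds.2 fun j =>
        tendsto_limUnder_of_hasDerivAt_of_integrableOn_Ioi (a := 0) (fun x _ => hN x i j)
          (hN' i j).integrableOn⟩,
    ⟨Matrix.of fun i j => limUnder atBot fun t => N t i j,
      tendsto_pi_nhds.2 fun i => tendsto_pi_nhds.2 fun j =>
        tendsto_limUnder_of_hasDerivAt_of_integrableOn_Iic (a := 0) (fun x _ => hN x i j)
          (hN' i j).integrableOn⟩⟩

def sigma1 : Matrix (Fin 2) (Fin 2) ℂ := !![0, 1; 1, 0]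

theorem sigma1_mul_sigma1 : sigma1 * sigma1 = 1 := by
  ext i j; fin_cases i <;> fin_cases j <;> simp [sigma1]

theorem sigma1_mul_mul_sigma1_apply (A : Matrix (Fin 2) (Fin 2) ℂ) (i j : Fin 2) :
    (sigma1 * A * sigma1) i j = A i.rev j.rev := by
  fin_cases i <;> fin_cases j <;>
    simp [sigma1, Matrix.mul_apply, Fin.sum_univ_two, Matrix.vecMul, dotProduct]

/-- The group `SU(1,1)`. -/
def su11 : Set (Matrix (Fin 2) (Fin 2) ℂ) :=
  {A | sigma1 * A.map (starRingEnd ℂ) * sigma1 = A ∧ A.det = 1}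

theorem isClosed_su11 : IsClosed su11 :=
  (isClosed_eq ((continuous_const.matrix_mul
    (continuous_id.matrix_map Complex.continuous_conj)).matrix_mul continuous_const)
    continuous_id).inter (isClosed_eq continuous_id.matrix_det continuous_const)

theorem mul_mem_su11 {A B : Matrix (Fin 2) (Fin 2) ℂ} (hA : A ∈ su11) (hB : B ∈ su11) :
    A * B ∈ su11 := by
  refine ⟨?_, by rw [Matrix.det_mul, hA.2, hB.2, one_mul]⟩
  conv_rhs => rw [← hA.1, ← hB.1]
  simp only [Matrix.map_mul, Matrix.mul_assoc]
  rw [← Matrix.mul_assoc sigma1 sigma1, sigma1_mul_sigma1, Matrix.one_mul]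

theorem exists_eq_of_mem_su11 {A : Matrix (Fin 2) (Fin 2) ℂ} (hA : A ∈ su11) :
    ∃ a b : ℂ, A = !![a, starRingEnd ℂ b; b, starRingEnd ℂ a] ∧ ‖a‖ ^ 2 - ‖b‖ ^ 2 = 1 := by
  have h i j : starRingEnd ℂ (A i.rev j.rev) = A i j := by
    simpa [sigma1_mul_mul_sigma1_apply] using congrFun (congrFun hA.1 i) j
  have h01 : A 0 1 = starRingEnd ℂ (A 1 0) := (h 0 1).symm
  have h11 : A 1 1 = starRingEnd ℂ (A 0 0) := (h 1 1).symm
  refine ⟨A 0 0, A 1 0, ?_, ?_⟩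
  · ext i j
    fin_cases i <;> fin_cases j <;> simp [h01, h11]
  · have hdet : A 0 0 * starRingEnd ℂ (A 0 0) - A 1 0 * starRingEnd ℂ (A 1 0) = 1 := by
      rw [← h11, ← h01, mul_comm (A 1 0), ← Matrix.det_fin_two, hA.2]
    rw [Complex.mul_conj, Complex.mul_conj] at hdet
    rw [Complex.sq_norm, Complex.sq_norm]
    exact_mod_cast hdet

theorem vmat_mul_apply_zero (ψ : ℝ → ℂ) (lam : ℂ) (x : ℝ) (A : Matrix (Fin 2) (Fin 2) ℂ)
    (j : Fin 2) :
    (Vmat ψ lam x * A) 0 j = -(I * lam / 2) * A 0 j + starRingEnd ℂ (ψ x) * A 1 j := by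
  simp [Vmat, sigma3, Y0, Matrix.mul_apply, Fin.sum_univ_two]
  ring

theorem vmat_mul_apply_one (ψ : ℝ → ℂ) (lam : ℂ) (x : ℝ) (A : Matrix (Fin 2) (Fin 2) ℂ)
    (j : Fin 2) :
    (Vmat ψ lam x * A) 1 j = ψ x * A 0 j + I * lam / 2 * A 1 j := by
  simp [Vmat, sigma3, Y0, Matrix.mul_apply, Fin.sum_univ_two]
  ring

theorem sigma1_mul_map_vmat_mul_sigma1 (ψ : ℝ → ℂ) (lam x : ℝ) :
    sigma1 * (Vmat ψ lam x).map (starRingEnd ℂ) * sigma1 = Vmat ψ lam x := by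
  ext i j
  fin_cases i <;> fin_cases j <;>
    simp [sigma1_mul_mul_sigma1_apply, Vmat, sigma3, Y0, Complex.conj_ofReal, map_ofNat] <;> ring

theorem einv_mem_su11 (lam x : ℝ) : Einv lam x ∈ su11 := by
  have hconj : starRingEnd ℂ (I * lam * x / 2) = -(I * lam * x / 2) := by
    simp [Complex.conj_ofReal, map_ofNat]; ring
  refine ⟨?_, ?_⟩
  · ext i j
    fin_cases i <;> fin_cases j <;>
      simp [sigma1_mul_mul_sigma1_apply, Einv, ← Complex.exp_conj, hconj]
  · simp [Einv, Matrix.det_fin_two, ← Complex.exp_add]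

theorem adjugate_einv (lam x : ℝ) : (Einv lam x).adjugate = Einv lam (-x) := by
  ext i j
  fin_cases i <;> fin_cases j <;> simp [Einv, Matrix.adjugate_fin_two] <;> ring_nf

theorem einv_mul_apply_zero (lam x : ℝ) (A : Matrix (Fin 2) (Fin 2) ℂ) (j : Fin 2) :
    (Einv lam x * A) 0 j = cexp (I * lam * x / 2) * A 0 j := by
  simp [Einv, Matrix.mul_apply, Fin.sum_univ_two]

theorem einv_mul_apply_one (lam x : ℝ) (A : Matrix (Fin 2) (Fin 2) ℂ) (j : Fin 2) :
    (Einv lam x * A) 1 j = cexp (-(I * lam * x / 2)) * A 1 j := by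
  simp [Einv, Matrix.mul_apply, Fin.sum_univ_two]

theorem y0_mul_apply_zero (ψ : ℝ → ℂ) (x : ℝ) (A : Matrix (Fin 2) (Fin 2) ℂ) (j : Fin 2) :
    (Y0 ψ x * A) 0 j = starRingEnd ℂ (ψ x) * A 1 j := by
  simp [Y0, Matrix.mul_apply, Fin.sum_univ_two]

theorem y0_mul_apply_one (ψ : ℝ → ℂ) (x : ℝ) (A : Matrix (Fin 2) (Fin 2) ℂ) (j : Fin 2) :
    (Y0 ψ x * A) 1 j = ψ x * A 0 j := by
  simp [Y0, Matrix.mul_apply, Fin.sum_univ_two]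

theorem norm_einv_mul_y0_mul_apply (lam x : ℝ) (ψ : ℝ → ℂ) (A : Matrix (Fin 2) (Fin 2) ℂ)
    (i j : Fin 2) : ‖(Einv lam x * Y0 ψ x * A) i j‖ = ‖ψ x‖ * ‖A i.rev j‖ := by
  rw [Matrix.mul_assoc]
  fin_cases i <;>
    simp [einv_mul_apply_zero, einv_mul_apply_one, y0_mul_apply_zero, y0_mul_apply_one,
      Complex.norm_exp]

def colNormSq (A : Matrix (Fin 2) (Fin 2) ℂ) (j : Fin 2) : ℝ := ‖A 0 j‖ ^ 2 + ‖A 1 j‖ ^ 2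

theorem colNormSq_nonneg (A : Matrix (Fin 2) (Fin 2) ℂ) (j : Fin 2) : 0 ≤ colNormSq A j := by
  unfold colNormSq; positivity

theorem sq_norm_le_colNormSq (A : Matrix (Fin 2) (Fin 2) ℂ) (i j : Fin 2) :
    ‖A i j‖ ^ 2 ≤ colNormSq A j := by
  unfold colNormSq; fin_cases i <;> simp

theorem abs_re_mul_conj_le_colNormSq (z : ℂ) (A : Matrix (Fin 2) (Fin 2) ℂ) (j : Fin 2) :
    |4 * (z * A 0 j * starRingEnd ℂ (A 1 j)).re| ≤ 2 * ‖z‖ * colNormSq A j := by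
  have hre := Complex.abs_re_le_norm (z * A 0 j * starRingEnd ℂ (A 1 j))
  rw [norm_mul, norm_mul, Complex.norm_conj] at hre
  have hamgm : 2 * (‖A 0 j‖ * ‖A 1 j‖) ≤ colNormSq A j := by
    unfold colNormSq; nlinarith [sq_nonneg (‖A 0 j‖ - ‖A 1 j‖)]
  rw [abs_mul, abs_of_pos four_pos]
  nlinarith [norm_nonneg z]

/-- The Zakharov–Shabat system `P' = V P`, entrywise. -/
def SolvesZS (ψ : ℝ → ℂ) (lam : ℂ) (P : ℝ → Matrix (Fin 2) (Fin 2) ℂ) : Prop :=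
  ∀ x i j, HasDerivAt (fun t => P t i j) ((Vmat ψ lam x * P x) i j) x

section SolvesZS

variable {ψ : ℝ → ℂ} {P Q : ℝ → Matrix (Fin 2) (Fin 2) ℂ}

theorem SolvesZS.sub {lam : ℂ} (hP : SolvesZS ψ lam P) (hQ : SolvesZS ψ lam Q) :
    SolvesZS ψ lam (P - Q) := fun x i j => by
  rw [Pi.sub_apply, Matrix.mul_sub]
  exact (hP x i j).sub (hQ x i j)

theorem SolvesZS.mul_const {lam : ℂ} (hP : SolvesZS ψ lam P) (C : Matrix (Fin 2) (Fin 2) ℂ) :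
    SolvesZS ψ lam (fun x => P x * C) := fun x i j => by
  simp only [← Matrix.mul_assoc, Matrix.mul_apply (N := C), Fin.sum_univ_two]
  exact ((hP x i 0).mul_const (C 0 j)).add ((hP x i 1).mul_const (C 1 j))

theorem SolvesZS.sigma1_conj {lam : ℝ} (hP : SolvesZS ψ lam P) :
    SolvesZS ψ lam (fun x => sigma1 * (P x).map (starRingEnd ℂ) * sigma1) := by
  intro x i j
  have hV : sigma1 * (Vmat ψ lam x * P x).map (starRingEnd ℂ) * sigma1
      = Vmat ψ lam x * (sigma1 * (P x).map (starRingEnd ℂ) * sigma1) := by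
    conv_rhs => rw [← sigma1_mul_map_vmat_mul_sigma1 ψ lam x]
    simp only [Matrix.map_mul, Matrix.mul_assoc]
    rw [← Matrix.mul_assoc sigma1 sigma1, sigma1_mul_sigma1, Matrix.one_mul]
  simp only [sigma1_mul_mul_sigma1_apply, Matrix.map_apply, ← hV]
  exact (hP x i.rev j.rev).star

theorem SolvesZS.det_eq {lam : ℂ} (hP : SolvesZS ψ lam P) (a x : ℝ) : (P x).det = (P a).det := by
  have hderiv : ∀ t, HasDerivAt (fun s => (P s).det) 0 t := fun t => by
    simp only [Matrix.det_fin_two]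
    refine (((hP t 0 0).mul (hP t 1 1)).sub ((hP t 0 1).mul (hP t 1 0))).congr_deriv ?_
    simp only [vmat_mul_apply_zero, vmat_mul_apply_one]
    ring
  exact is_const_of_deriv_eq_zero (fun t => (hderiv t).differentiableAt)
    (fun t => (hderiv t).deriv) x a

theorem SolvesZS.hasDerivAt_colNormSq {lam : ℝ} (hP : SolvesZS ψ lam P) (x : ℝ) (j : Fin 2) :
    HasDerivAt (fun t => colNormSq (P t) j)
      (4 * (ψ x * P x 0 j * starRingEnd ℂ (P x 1 j)).re) x := by
  refine ((hP x 0 j).norm_sq.add (hP x 1 j).norm_sq).congr_deriv ?_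
  simp only [Complex.inner, vmat_mul_apply_zero, vmat_mul_apply_one, Complex.mul_re,
    Complex.add_re, Complex.conj_re, Complex.conj_im, Complex.mul_im, Complex.add_im,
    Complex.neg_re, Complex.neg_im, Complex.div_ofNat_re, Complex.div_ofNat_im, Complex.I_re,
    Complex.I_im, Complex.ofReal_re, Complex.ofReal_im]
  ring

theorem SolvesZS.colNormSq_le {lam : ℝ} (hψ : Continuous ψ) (hP : SolvesZS ψ lam P)
    (j : Fin 2) (a x : ℝ) :
    colNormSq (P x) j ≤ colNormSq (P a) j * Real.exp (2 * |∫ s in a..x, ‖ψ s‖|) := by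
  have hW (t : ℝ) : HasDerivAt (fun t => 2 * ∫ s in a..t, ‖ψ s‖) (2 * ‖ψ t‖) t :=
    (hψ.norm.integral_hasStrictDerivAt a t).hasDerivAt.const_mul 2
  have h := le_mul_exp_abs_sub_of_abs_deriv_le (hP.hasDerivAt_colNormSq · j) hW
    (fun t => abs_re_mul_conj_le_colNormSq (ψ t) (P t) j) (colNormSq_nonneg (P a) j) x
  simpa [abs_mul] using h

theorem SolvesZS.eq_of_eq {lam : ℝ} (hψ : Continuous ψ) (hP : SolvesZS ψ lam P)
    (hQ : SolvesZS ψ lam Q) {a : ℝ} (h : P a = Q a) : P = Q := by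
  funext x
  ext i j
  have hzero : colNormSq ((P - Q) x) j ≤ 0 := by
    simpa [h, colNormSq] using (hP.sub hQ).colNormSq_le hψ j a x
  have hsq := (sq_norm_le_colNormSq _ i j).trans hzero
  have hnorm : ‖(P - Q) x i j‖ = 0 := by nlinarith [norm_nonneg ((P - Q) x i j)]
  simpa [sub_eq_zero] using hnorm

theorem SolvesZS.exists_bound {lam : ℝ} (hψ : Continuous ψ) (hψi : Integrable ψ)
    (hP : SolvesZS ψ lam P) : ∃ C, ∀ x i j, ‖P x i j‖ ≤ C := by
  refine ⟨1 + (colNormSq (P 0) 0 + colNormSq (P 0) 1) * Real.exp (2 * ∫ s, ‖ψ s‖),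
    fun x i j => ?_⟩
  have hint : |∫ s in (0 : ℝ)..x, ‖ψ s‖| ≤ ∫ s, ‖ψ s‖ := by
    simpa using intervalIntegral.norm_integral_le_integral_norm_uIoc.trans
      (setIntegral_le_integral hψi.norm.norm (ae_of_all _ fun s => norm_nonneg _))
  have hstart : colNormSq (P 0) j ≤ colNormSq (P 0) 0 + colNormSq (P 0) 1 := by
    fin_cases j <;> simp [colNormSq_nonneg]
  calc ‖P x i j‖ ≤ 1 + ‖P x i j‖ ^ 2 := by nlinarith [sq_nonneg (‖P x i j‖ - 1)]
    _ ≤ 1 + colNormSq (P 0) j * Real.exp (2 * |∫ s in (0 : ℝ)..x, ‖ψ s‖|) := by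
      gcongr
      exact (sq_norm_le_colNormSq _ i j).trans (hP.colNormSq_le hψ j 0 x)
    _ ≤ _ := by
      gcongr
      exact add_nonneg (colNormSq_nonneg _ _) (colNormSq_nonneg _ _)

theorem SolvesZS.hasDerivAt_einv_mul {lam : ℝ} (hP : SolvesZS ψ lam P) (x : ℝ) (i j : Fin 2) :
    HasDerivAt (fun t => (Einv lam t * P t) i j) ((Einv lam x * Y0 ψ x * P x) i j) x := by
  have hphase : HasDerivAt (fun t : ℝ => I * lam * t / 2) (I * lam / 2) x := by
    simpa using ((hasDerivAt_id x).ofReal_comp.const_mul (I * lam)).div_const 2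
  rw [Matrix.mul_assoc]
  fin_cases i
  · simp only [Fin.zero_eta, einv_mul_apply_zero, y0_mul_apply_zero]
    refine (hphase.cexp.mul (hP x 0 j)).congr_deriv ?_
    rw [vmat_mul_apply_zero]
    ring
  · simp only [Fin.mk_one, einv_mul_apply_one, y0_mul_apply_one]
    refine (hphase.neg.cexp.mul (hP x 1 j)).congr_deriv ?_
    rw [vmat_mul_apply_one, Pi.neg_apply]
    ring

theorem SolvesZS.exists_tendsto_einv_mul {lam : ℝ} (hψ : Continuous ψ) (hψi : Integrable ψ)
    (hP : SolvesZS ψ lam P) :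
    (∃ L, Tendsto (fun x => Einv lam x * P x) atTop (𝓝 L)) ∧
      ∃ L, Tendsto (fun x => Einv lam x * P x) atBot (𝓝 L) := by
  obtain ⟨C, hC⟩ := hP.exists_bound hψ hψi
  refine Matrix.exists_tendsto_of_hasDerivAt_of_integrable hP.hasDerivAt_einv_mul fun i j => ?_
  refine (hψi.norm.mul_const C).mono' ?_ (ae_of_all _ fun t => ?_)
  · exact (aestronglyMeasurable_deriv _ _).congr
      (ae_of_all _ fun t => (hP.hasDerivAt_einv_mul t i j).deriv)
  · rw [norm_einv_mul_y0_mul_apply]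
    exact mul_le_mul_of_nonneg_left (hC t _ j) (norm_nonneg _)

end SolvesZS

section Transition

variable {ψ : ℝ → ℂ} {M : ℝ → ℝ → Matrix (Fin 2) (Fin 2) ℂ}

theorem det_transition_eq_one {lam : ℂ} (hM : ∀ y, SolvesZS ψ lam (fun x => M x y))
    (hinit : ∀ y, M y y = 1) (x y : ℝ) : (M x y).det = 1 := by
  rw [(hM y).det_eq y x, hinit, Matrix.det_one]

variable {lam : ℝ} (hψ : Continuous ψ) (hM : ∀ y, SolvesZS ψ lam (fun x => M x y))
  (hinit : ∀ y, M y y = 1)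
include hψ hM hinit

theorem transition_mem_su11 (x y : ℝ) : M x y ∈ su11 := by
  refine ⟨congrFun ((hM y).sigma1_conj.eq_of_eq hψ (hM y) (a := y) ?_) x,
    det_transition_eq_one hM hinit x y⟩
  simp [hinit, sigma1_mul_sigma1]

theorem transition_eq_mul_adjugate (x y : ℝ) : M x y = M x 0 * (M y 0).adjugate := by
  refine congrFun ((hM y).eq_of_eq hψ ((hM 0).mul_const _) (a := y) ?_) x
  rw [hinit, Matrix.mul_adjugate, det_transition_eq_one hM hinit, one_smul]

end Transition

/-- For Schwartz potential `ψ`, the reduced transition matrix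
`T(x,y,λ) = E(λx/2)⁻¹ M(x,y,λ) E(-λy/2)⁻¹` has a limit as `x → +∞`, `y → -∞`, of the
form `[[a, conj b],[b, conj a]]` with `|a|² - |b|² = 1`. -/
theorem statement15 (ψ : SchwartzMap ℝ ℂ)
    (M : ℂ → ℝ → ℝ → Matrix (Fin 2) (Fin 2) ℂ)
    (hODE : ∀ lam y x i j, HasDerivAt (fun t => M lam t y i j)
      ((Vmat (fun s => ψ s) lam x * M lam x y) i j) x)
    (hinit : ∀ lam y, M lam y y = 1) :
    ∀ lam : ℝ, ∃ a b : ℂ,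
      Tendsto (fun p : ℝ × ℝ =>
          Einv lam p.1 * M (lam : ℂ) p.1 p.2 * Einv lam (-p.2))
        (atTop ×ˢ atBot)
        (nhds !![a, (starRingEnd ℂ) b; b, (starRingEnd ℂ) a]) ∧
      ‖a‖ ^ 2 - ‖b‖ ^ 2 = 1 := by
  intro lam
  have hψ : Continuous fun s => ψ s := ψ.continuous
  have hM : ∀ y, SolvesZS (fun s => ψ s) lam (fun x => M lam x y) := hODE lam
  obtain ⟨⟨Lp, hLp⟩, ⟨Lm, hLm⟩⟩ := (hM 0).exists_tendsto_einv_mul hψ ψ.integrable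
  have hT (x y : ℝ) : Einv lam x * M lam x y * Einv lam (-y)
      = (Einv lam x * M lam x 0) * (Einv lam y * M lam y 0).adjugate := by
    rw [transition_eq_mul_adjugate hψ hM (hinit lam), Matrix.adjugate_mul_distrib, adjugate_einv]
    simp only [Matrix.mul_assoc]
  have hlim : Tendsto (fun p : ℝ × ℝ => Einv lam p.1 * M lam p.1 p.2 * Einv lam (-p.2))
      (atTop ×ˢ atBot) (𝓝 (Lp * Lm.adjugate)) := by
    simp only [hT]
    exact (hLp.comp tendsto_fst).mul
      ((continuous_id.matrix_adjugate.tendsto Lm).comp (hLm.comp tendsto_snd))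
  have hmem : ∀ p : ℝ × ℝ, Einv lam p.1 * M lam p.1 p.2 * Einv lam (-p.2) ∈ su11 := fun p =>
    mul_mem_su11 (mul_mem_su11 (einv_mem_su11 _ _)
      (transition_mem_su11 hψ hM (hinit lam) _ _)) (einv_mem_su11 _ _)
  obtain ⟨a, b, hab, hnorm⟩ :=
    exists_eq_of_mem_su11 (isClosed_su11.mem_of_tendsto hlim (Eventually.of_forall hmem))
  exact ⟨a, b, hab ▸ hlim, hnorm⟩
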